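/- Let dom t_α := {f ∈ L²(r_−) : f_e ∈ L²(η_α), f_o ∈ L²(ω_α)} where f_e, f_o are the even and odd parts of f. Then dom t_α with the inner product t_α(f,g) := 2(f_o,g_o)_{ω_α} + (f,g)_{η_α} is a Hilbert space (complete inner product space). -/

import Mathlib

open MeasureTheory Filter

/-- `η_α(x) := (√(|x|^α+1) − √(|x|^α))·|r(x)|`. -/
noncomputable def eta (α : ℝ) (r : ℝ → ℝ) (x : ℝ) : ℝ :=
  (Real.sqrt (|x| ^ α + 1) - Real.sqrt (|x| ^ α)) * |r x|

/-- `ω_α(x) := √(|x|^α)·|r(x)|`. -/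
noncomputable def omegaW (α : ℝ) (r : ℝ → ℝ) (x : ℝ) : ℝ :=
  Real.sqrt (|x| ^ α) * |r x|

/-- `r₊(x) := x·r(x)`. -/
def rplus (r : ℝ → ℝ) (x : ℝ) : ℝ := x * r x

/-- `r₋(x) := r(x)/x` (with junk value `0` at `x = 0`, where `r` vanishes anyway). -/
noncomputable def rminus (r : ℝ → ℝ) (x : ℝ) : ℝ := r x / x

/-- Membership in the weighted space `L²(w)`. -/
def MemL2W (w : ℝ → ℝ) (f : ℝ → ℂ) : Prop :=
  Integrable (fun x => ‖f x‖ ^ 2 * w x)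

/-- Even part of a function. -/
noncomputable def evenPart (f : ℝ → ℂ) (x : ℝ) : ℂ := (f x + f (-x)) / 2

/-- Odd part of a function. -/
noncomputable def oddPart (f : ℝ → ℂ) (x : ℝ) : ℂ := (f x - f (-x)) / 2

/-- `dom t_α = {f ∈ L²(r₋) : f_e ∈ L²(η_α), f_o ∈ L²(ω_α)}`. -/
noncomputable def DomT (α : ℝ) (r : ℝ → ℝ) (f : ℝ → ℂ) : Prop :=
  MemL2W (rminus r) f ∧ MemL2W (eta α r) (evenPart f) ∧ MemL2W (omegaW α r) (oddPart f)

/-- The squared norm `t_α(f,f) = 2‖f_o‖²_{ω_α} + ‖f‖²_{η_α}`. -/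
noncomputable def Qform (α : ℝ) (r : ℝ → ℝ) (f : ℝ → ℂ) : ℝ :=
  2 * (∫ x, ‖oddPart f x‖ ^ 2 * omegaW α r x) + ∫ x, ‖f x‖ ^ 2 * eta α r x

/-- The sesquilinear form `t_α(f,g) = 2(f_o,g_o)_{ω_α} + (f,g)_{η_α}`. -/
noncomputable def tForm (α : ℝ) (r : ℝ → ℝ) (f g : ℝ → ℂ) : ℂ :=
  2 * (∫ x, oddPart f x * (starRingEnd ℂ) (oddPart g x) * ((omegaW α r x : ℝ) : ℂ)) +
    ∫ x, f x * (starRingEnd ℂ) (g x) * ((eta α r x : ℝ) : ℂ)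

open scoped Topology ComplexConjugate

/-!
Weighting Lebesgue measure by `η_α` and by `ω_α` turns `t_α(f,f)` into
`2‖f_o‖²_{L²(ω_α)} + ‖f‖²_{L²(η_α)}`, so a `t_α`-Cauchy sequence `Fₙ` has a limit `g` in
`L²(η_α)`, and its odd parts have a limit `h` in `L²(ω_α)`. Since `η_α` is even, `f ↦ f_o` is a
contraction of `L²(η_α)`, and since `η_α ≤ C ω_α` the odd parts also converge to `h` in
`L²(η_α)`; hence `g_o = h` wherever `ω_α > 0`, and `g` is the limit of `Fₙ` in `dom t_α`. That
`g ∈ L²(r₋)` follows from `|r₋| ≤ C' η_α`, which holds because `r` vanishes near `0` and `α ≤ 2`.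
-/

namespace MeasureTheory

variable {X E : Type*} [MeasurableSpace X] {μ : Measure X} [NormedAddCommGroup E]

theorem MemLp.norm_toLp_sq {f : X → E} (hf : MemLp f 2 μ) :
    ‖hf.toLp f‖ ^ 2 = ∫ x, ‖f x‖ ^ 2 ∂μ := by
  rw [Lp.norm_toLp, hf.eLpNorm_eq_integral_rpow_norm two_ne_zero ENNReal.ofNat_ne_top,
    ENNReal.toReal_ofReal (by positivity), ← Real.rpow_natCast, ← Real.rpow_mul
    (integral_nonneg fun x => by positivity)]
  norm_num

theorem tendsto_toLp_iff_tendsto_integral_norm_sub_sq {ι : Type*} {l : Filter ι} {F : ι → X → E}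
    {f : X → E} (hF : ∀ i, MemLp (F i) 2 μ) (hf : MemLp f 2 μ) :
    Tendsto (fun i => (hF i).toLp (F i)) l (𝓝 (hf.toLp f)) ↔
      Tendsto (fun i => ∫ x, ‖F i x - f x‖ ^ 2 ∂μ) l (𝓝 0) := by
  have hsq : ∀ i, ∫ x, ‖F i x - f x‖ ^ 2 ∂μ = ‖(hF i).toLp (F i) - hf.toLp f‖ ^ 2 := fun i => by
    rw [← MemLp.toLp_sub, MemLp.norm_toLp_sq]; rfl
  rw [tendsto_iff_norm_sub_tendsto_zero, funext hsq]
  constructor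
  · intro h; simpa using h.pow 2
  · intro h
    simpa using (Real.continuous_sqrt.tendsto 0).comp h |>.congr fun i => by simp

theorem exists_memLp_tendsto_integral_norm_sub_sq [CompleteSpace E] {F : ℕ → X → E}
    (hF : ∀ n, MemLp (F n) 2 μ)
    (hcau : ∀ δ > 0, ∃ N, ∀ m ≥ N, ∀ n ≥ N, ∫ x, ‖F m x - F n x‖ ^ 2 ∂μ < δ) :
    ∃ g : X → E, StronglyMeasurable g ∧ MemLp g 2 μ ∧
      Tendsto (fun n => ∫ x, ‖F n x - g x‖ ^ 2 ∂μ) atTop (𝓝 0) := by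
  have hcauchy : CauchySeq fun n => (hF n).toLp (F n) := by
    refine Metric.cauchySeq_iff.mpr fun δ hδ => ?_
    obtain ⟨N, hN⟩ := hcau (δ ^ 2) (by positivity)
    refine ⟨N, fun m hm n hn => ?_⟩
    rw [dist_eq_norm, ← MemLp.toLp_sub]
    refine lt_of_pow_lt_pow_left₀ 2 hδ.le ?_
    rw [MemLp.norm_toLp_sq]
    exact hN m hm n hn
  obtain ⟨v, hv⟩ := cauchySeq_tendsto_of_complete hcauchy
  refine ⟨v, Lp.stronglyMeasurable v, Lp.memLp v, ?_⟩
  rw [← Lp.toLp_coeFn v (Lp.memLp v)] at hv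
  exact (tendsto_toLp_iff_tendsto_integral_norm_sub_sq hF _).mp hv

theorem ae_eq_of_tendsto_integral_norm_sub_sq {ι : Type*} {l : Filter ι} [l.NeBot]
    {F : ι → X → E} {f g : X → E} (hF : ∀ i, MemLp (F i) 2 μ) (hf : MemLp f 2 μ)
    (hg : MemLp g 2 μ) (hFf : Tendsto (fun i => ∫ x, ‖F i x - f x‖ ^ 2 ∂μ) l (𝓝 0))
    (hFg : Tendsto (fun i => ∫ x, ‖F i x - g x‖ ^ 2 ∂μ) l (𝓝 0)) : f =ᵐ[μ] g :=
  (MemLp.toLp_eq_toLp_iff hf hg).mp <| tendsto_nhds_unique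
    ((tendsto_toLp_iff_tendsto_integral_norm_sub_sq hF hf).mpr hFf)
    ((tendsto_toLp_iff_tendsto_integral_norm_sub_sq hF hg).mpr hFg)

end MeasureTheory

theorem oddPart_sub (f g : ℝ → ℂ) : oddPart (f - g) = oddPart f - oddPart g := by
  ext x; simp only [oddPart, Pi.sub_apply]; ring

theorem evenPart_add_oddPart (f : ℝ → ℂ) : evenPart f + oddPart f = f := by
  ext x; simp only [Pi.add_apply, evenPart, oddPart]; ring

theorem Measurable.evenPart {f : ℝ → ℂ} (hf : Measurable f) : Measurable (evenPart f) :=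
  (hf.add (hf.comp measurable_neg)).div_const 2

theorem Measurable.oddPart {f : ℝ → ℂ} (hf : Measurable f) : Measurable (oddPart f) :=
  (hf.sub (hf.comp measurable_neg)).div_const 2

noncomputable def weighted (w : ℝ → ℝ) : Measure ℝ :=
  volume.withDensity fun x => ENNReal.ofReal (w x)

section Weighted

variable {w v : ℝ → ℝ}

theorem integral_norm_sq_mul_nonneg (hw0 : ∀ x, 0 ≤ w x) (f : ℝ → ℂ) :
    0 ≤ ∫ x, ‖f x‖ ^ 2 * w x :=
  integral_nonneg fun x => mul_nonneg (sq_nonneg _) (hw0 x)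

theorem integral_weighted (hw : Measurable w) (hw0 : ∀ x, 0 ≤ w x) (g : ℝ → ℝ) :
    ∫ x, g x ∂weighted w = ∫ x, g x * w x := by
  rw [weighted, integral_withDensity_eq_integral_toReal_smul hw.ennreal_ofReal
    (ae_of_all _ fun _ => ENNReal.ofReal_lt_top)]
  simp_rw [ENNReal.toReal_ofReal (hw0 _), smul_eq_mul, mul_comm]

theorem memL2W_iff_memLp (hw : Measurable w) (hw0 : ∀ x, 0 ≤ w x) {f : ℝ → ℂ}
    (hf : AEStronglyMeasurable f) : MemL2W w f ↔ MemLp f 2 (weighted w) := by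
  rw [weighted, memLp_two_iff_integrable_sq_norm
    (hf.mono_ac (withDensity_absolutelyContinuous _ _)),
    integrable_withDensity_iff_integrable_smul' hw.ennreal_ofReal
    (ae_of_all _ fun _ => ENNReal.ofReal_lt_top), MemL2W]
  simp_rw [ENNReal.toReal_ofReal (hw0 _), smul_eq_mul, mul_comm]

theorem MemL2W.comp_neg (hwe : ∀ x, w (-x) = w x) {f : ℝ → ℂ} (hf : MemL2W w f) :
    MemL2W w fun x => f (-x) := by
  simpa only [MemL2W, hwe] using Integrable.comp_neg hf

theorem MemL2W.add (hw : Measurable w) (hw0 : ∀ x, 0 ≤ w x) {f g : ℝ → ℂ}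
    (hfm : AEStronglyMeasurable f) (hgm : AEStronglyMeasurable g) (hf : MemL2W w f)
    (hg : MemL2W w g) : MemL2W w (f + g) := by
  rw [memL2W_iff_memLp hw hw0 (hfm.add hgm)]
  exact ((memL2W_iff_memLp hw hw0 hfm).mp hf).add ((memL2W_iff_memLp hw hw0 hgm).mp hg)

theorem MemL2W.sub (hw : Measurable w) (hw0 : ∀ x, 0 ≤ w x) {f g : ℝ → ℂ}
    (hfm : AEStronglyMeasurable f) (hgm : AEStronglyMeasurable g) (hf : MemL2W w f)
    (hg : MemL2W w g) : MemL2W w (f - g) := by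
  rw [memL2W_iff_memLp hw hw0 (hfm.sub hgm)]
  exact ((memL2W_iff_memLp hw hw0 hfm).mp hf).sub ((memL2W_iff_memLp hw hw0 hgm).mp hg)

theorem memL2W_evenPart (hw : Measurable w) (hw0 : ∀ x, 0 ≤ w x) (hwe : ∀ x, w (-x) = w x)
    {f : ℝ → ℂ} (hfm : Measurable f) (hf : MemL2W w f) : MemL2W w (evenPart f) := by
  have h := (hf.add hw hw0 hfm.aestronglyMeasurable (hfm.comp measurable_neg).aestronglyMeasurable
    (hf.comp_neg hwe)).const_mul (1 / 4 : ℝ)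
  refine h.congr (ae_of_all _ fun x => ?_)
  simp only [evenPart, Function.comp_apply, Pi.add_apply, norm_div, div_pow, RCLike.norm_ofNat]
  ring

theorem memL2W_oddPart (hw : Measurable w) (hw0 : ∀ x, 0 ≤ w x) (hwe : ∀ x, w (-x) = w x)
    {f : ℝ → ℂ} (hfm : Measurable f) (hf : MemL2W w f) : MemL2W w (oddPart f) := by
  have h := (hf.sub hw hw0 hfm.aestronglyMeasurable (hfm.comp measurable_neg).aestronglyMeasurable
    (hf.comp_neg hwe)).const_mul (1 / 4 : ℝ)
  refine h.congr (ae_of_all _ fun x => ?_)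
  simp only [oddPart, Function.comp_apply, Pi.sub_apply, norm_div, div_pow, RCLike.norm_ofNat]
  ring

theorem MemL2W.of_abs_le_mul (hv : Measurable v) {C : ℝ} (hvw : ∀ x, |v x| ≤ C * w x)
    {f : ℝ → ℂ} (hfm : AEStronglyMeasurable f) (hf : MemL2W w f) : MemL2W v f := by
  refine (hf.const_mul C).mono' ((hfm.norm.pow 2).mul hv.aestronglyMeasurable)
    (ae_of_all _ fun x => ?_)
  rw [norm_mul, Real.norm_of_nonneg (sq_nonneg _), Real.norm_eq_abs]
  nlinarith [hvw x, sq_nonneg ‖f x‖]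

theorem norm_sq_mul_ae_eq (hw0 : ∀ x, 0 ≤ w x) {f g : ℝ → ℂ}
    (hfg : ∀ᵐ x, 0 < w x → f x = g x) :
    (fun x => ‖f x‖ ^ 2 * w x) =ᵐ[volume] fun x => ‖g x‖ ^ 2 * w x := by
  filter_upwards [hfg] with x hx
  rcases (hw0 x).eq_or_lt with h | h
  · simp [← h]
  · rw [hx h]

theorem exists_memL2W_tendsto_of_cauchy (hw : Measurable w) (hw0 : ∀ x, 0 ≤ w x)
    {F : ℕ → ℝ → ℂ} (hFm : ∀ n, Measurable (F n)) (hF : ∀ n, MemL2W w (F n))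
    (hcau : ∀ δ > 0, ∃ N, ∀ m ≥ N, ∀ n ≥ N, ∫ x, ‖F m x - F n x‖ ^ 2 * w x < δ) :
    ∃ g : ℝ → ℂ, Measurable g ∧ MemL2W w g ∧
      Tendsto (fun n => ∫ x, ‖F n x - g x‖ ^ 2 * w x) atTop (𝓝 0) := by
  simp_rw [← integral_weighted hw hw0] at hcau ⊢
  obtain ⟨g, hgm, hg, hFg⟩ := exists_memLp_tendsto_integral_norm_sub_sq
    (fun n => (memL2W_iff_memLp hw hw0 (hFm n).aestronglyMeasurable).mp (hF n)) hcau
  exact ⟨g, hgm.measurable, (memL2W_iff_memLp hw hw0 hgm.measurable.aestronglyMeasurable).mpr hg,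
    hFg⟩

theorem ae_eq_of_tendsto_memL2W (hw : Measurable w) (hw0 : ∀ x, 0 ≤ w x)
    {F : ℕ → ℝ → ℂ} {f g : ℝ → ℂ} (hFm : ∀ n, Measurable (F n)) (hF : ∀ n, MemL2W w (F n))
    (hfm : Measurable f) (hf : MemL2W w f) (hgm : Measurable g) (hg : MemL2W w g)
    (hFf : Tendsto (fun n => ∫ x, ‖F n x - f x‖ ^ 2 * w x) atTop (𝓝 0))
    (hFg : Tendsto (fun n => ∫ x, ‖F n x - g x‖ ^ 2 * w x) atTop (𝓝 0)) :
    ∀ᵐ x, 0 < w x → f x = g x := by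
  simp_rw [← integral_weighted hw hw0] at hFf hFg
  have hfg : f =ᵐ[weighted w] g := ae_eq_of_tendsto_integral_norm_sub_sq
    (fun n => (memL2W_iff_memLp hw hw0 (hFm n).aestronglyMeasurable).mp (hF n))
    ((memL2W_iff_memLp hw hw0 hfm.aestronglyMeasurable).mp hf)
    ((memL2W_iff_memLp hw hw0 hgm.aestronglyMeasurable).mp hg) hFf hFg
  rw [Filter.EventuallyEq, weighted, ae_withDensity_iff hw.ennreal_ofReal] at hfg
  filter_upwards [hfg] with x hx hwx
  exact hx (ENNReal.ofReal_pos.mpr hwx).ne'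

theorem integral_norm_oddPart_sq_mul_le (hw0 : ∀ x, 0 ≤ w x) (hwe : ∀ x, w (-x) = w x)
    {f : ℝ → ℂ} (hf : MemL2W w f) :
    ∫ x, ‖oddPart f x‖ ^ 2 * w x ≤ ∫ x, ‖f x‖ ^ 2 * w x := by
  have hbound : ∀ x, ‖oddPart f x‖ ^ 2 * w x ≤
      (‖f x‖ ^ 2 * w x + ‖f (-x)‖ ^ 2 * w (-x)) / 2 := fun x => by
    have hsub : ‖f x - f (-x)‖ ≤ ‖f x‖ + ‖f (-x)‖ := norm_sub_le _ _
    have hodd : ‖oddPart f x‖ = ‖f x - f (-x)‖ / 2 := by simp [oddPart]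
    rw [hwe, hodd]
    have : (‖f x - f (-x)‖ / 2) ^ 2 ≤ (‖f x‖ ^ 2 + ‖f (-x)‖ ^ 2) / 2 := by
      nlinarith [norm_nonneg (f x - f (-x)), sq_nonneg (‖f x‖ - ‖f (-x)‖)]
    nlinarith [hw0 x]
  have hneg : Integrable fun x => ‖f (-x)‖ ^ 2 * w (-x) := Integrable.comp_neg hf
  calc ∫ x, ‖oddPart f x‖ ^ 2 * w x
      ≤ ∫ x, (‖f x‖ ^ 2 * w x + ‖f (-x)‖ ^ 2 * w (-x)) / 2 :=
        integral_mono_of_nonneg (ae_of_all _ fun x => by have := hw0 x; positivity)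
          ((Integrable.add hf hneg).div_const 2) (ae_of_all _ hbound)
    _ = ∫ x, ‖f x‖ ^ 2 * w x := by
        rw [integral_div, integral_add hf hneg,
          integral_neg_eq_self (fun x => ‖f x‖ ^ 2 * w x)]
        ring

theorem integral_norm_sq_mul_le_mul (hv0 : ∀ x, 0 ≤ v x) {C : ℝ} (hvw : ∀ x, v x ≤ C * w x)
    {f : ℝ → ℂ} (hf : MemL2W w f) :
    ∫ x, ‖f x‖ ^ 2 * v x ≤ C * ∫ x, ‖f x‖ ^ 2 * w x := by
  rw [← integral_const_mul]
  refine integral_mono_of_nonneg (ae_of_all _ fun x => by have := hv0 x; positivity)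
    (hf.const_mul C) (ae_of_all _ fun x => ?_)
  nlinarith [hvw x, sq_nonneg ‖f x‖]

theorem ae_oddPart_eq_of_tendsto (hv : Measurable v) (hv0 : ∀ x, 0 ≤ v x)
    (hve : ∀ x, v (-x) = v x) (hw : Measurable w) (hw0 : ∀ x, 0 ≤ w x) {C : ℝ}
    (hvw : ∀ x, v x ≤ C * w x) (hpos : ∀ x, 0 < w x → 0 < v x)
    {F : ℕ → ℝ → ℂ} {g h : ℝ → ℂ} (hFm : ∀ n, Measurable (F n)) (hF : ∀ n, MemL2W v (F n))
    (hFo : ∀ n, MemL2W w (oddPart (F n))) (hgm : Measurable g) (hg : MemL2W v g)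
    (hhm : Measurable h) (hh : MemL2W w h)
    (hFg : Tendsto (fun n => ∫ x, ‖F n x - g x‖ ^ 2 * v x) atTop (𝓝 0))
    (hFh : Tendsto (fun n => ∫ x, ‖oddPart (F n) x - h x‖ ^ 2 * w x) atTop (𝓝 0)) :
    ∀ᵐ x, 0 < w x → oddPart g x = h x := by
  have hFg_odd : Tendsto (fun n => ∫ x, ‖oddPart (F n) x - oddPart g x‖ ^ 2 * v x) atTop (𝓝 0) :=
    squeeze_zero (fun n => integral_norm_sq_mul_nonneg hv0 _)
      (fun n => by
        simpa only [oddPart_sub, Pi.sub_apply] using integral_norm_oddPart_sq_mul_le hv0 hve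
          ((hF n).sub hv hv0 (hFm n).aestronglyMeasurable hgm.aestronglyMeasurable hg))
      hFg
  have hFh_v : Tendsto (fun n => ∫ x, ‖oddPart (F n) x - h x‖ ^ 2 * v x) atTop (𝓝 0) :=
    squeeze_zero (fun n => integral_norm_sq_mul_nonneg hv0 _)
      (fun n => integral_norm_sq_mul_le_mul hv0 hvw ((hFo n).sub hw hw0
        (hFm n).oddPart.aestronglyMeasurable hhm.aestronglyMeasurable hh))
      (by simpa using hFh.const_mul C)
  have hgh := ae_eq_of_tendsto_memL2W hv hv0 (fun n => (hFm n).oddPart)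
    (fun n => memL2W_oddPart hv hv0 hve (hFm n) (hF n)) hgm.oddPart
    (memL2W_oddPart hv hv0 hve hgm hg) hhm
    (hh.of_abs_le_mul hv (fun x => (abs_of_nonneg (hv0 x)).trans_le (hvw x))
      hhm.aestronglyMeasurable) hFg_odd hFh_v
  filter_upwards [hgh] with x hx hwx using hx (hpos x hwx)

end Weighted

section Weights

variable {α ε : ℝ} {r : ℝ → ℝ}

theorem eta_nonneg (α : ℝ) (r : ℝ → ℝ) (x : ℝ) : 0 ≤ eta α r x :=
  mul_nonneg (sub_nonneg.mpr (Real.sqrt_le_sqrt (by linarith))) (abs_nonneg _)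

theorem omegaW_nonneg (α : ℝ) (r : ℝ → ℝ) (x : ℝ) : 0 ≤ omegaW α r x :=
  mul_nonneg (Real.sqrt_nonneg _) (abs_nonneg _)

theorem measurable_eta (hr : Measurable r) : Measurable (eta α r) := by
  unfold eta; fun_prop

theorem measurable_omegaW (hr : Measurable r) : Measurable (omegaW α r) := by
  unfold omegaW; fun_prop

theorem eta_neg (hr : ∀ x, r (-x) = -r x) (x : ℝ) : eta α r (-x) = eta α r x := by
  simp only [eta, abs_neg, hr]

theorem eta_mul_sqrt_add (α : ℝ) (r : ℝ → ℝ) (x : ℝ) :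
    eta α r x * (√(|x| ^ α + 1) + √(|x| ^ α)) = |r x| := by
  have ht : 0 ≤ |x| ^ α := Real.rpow_nonneg (abs_nonneg x) α
  have h1 := Real.sq_sqrt ht
  have h2 := Real.sq_sqrt (show 0 ≤ |x| ^ α + 1 by linarith)
  have hprod : (√(|x| ^ α + 1) + √(|x| ^ α)) * (√(|x| ^ α + 1) - √(|x| ^ α)) = 1 := by
    linear_combination h2 - h1
  rw [eta, mul_comm, ← mul_assoc, hprod, one_mul]

theorem eta_le_abs (α : ℝ) (r : ℝ → ℝ) (x : ℝ) : eta α r x ≤ |r x| := by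
  have h1 : 1 ≤ √(|x| ^ α + 1) + √(|x| ^ α) := by
    have := Real.sqrt_le_sqrt (show (1 : ℝ) ≤ |x| ^ α + 1 by
      linarith [Real.rpow_nonneg (abs_nonneg x) α])
    rw [Real.sqrt_one] at this
    linarith [Real.sqrt_nonneg (|x| ^ α)]
  rw [← eta_mul_sqrt_add]
  nlinarith [eta_nonneg α r x]

theorem eta_pos_iff (α : ℝ) (r : ℝ → ℝ) (x : ℝ) : 0 < eta α r x ↔ r x ≠ 0 := by
  have hgap : 0 < √(|x| ^ α + 1) - √(|x| ^ α) := sub_pos.mpr <|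
    Real.sqrt_lt_sqrt (Real.rpow_nonneg (abs_nonneg x) α) (lt_add_one _)
  rw [eta, mul_pos_iff_of_pos_left hgap, abs_pos]

theorem eta_pos_of_omegaW_pos {x : ℝ} (h : 0 < omegaW α r x) : 0 < eta α r x := by
  refine (eta_pos_iff α r x).mpr fun hrx => ?_
  simp [omegaW, hrx] at h

theorem eta_le_mul_omegaW (hα : 0 ≤ α) (hε : 0 < ε) (hr0 : ∀ x, |x| ≤ ε → r x = 0) (x : ℝ) :
    eta α r x ≤ (√(ε ^ α))⁻¹ * omegaW α r x := by
  by_cases hrx : r x = 0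
  · simp [eta, omegaW, hrx]
  have hεx : ε ≤ |x| := (lt_of_not_ge fun h => hrx (hr0 x h)).le
  have hpos : 0 < √(ε ^ α) := Real.sqrt_pos.mpr (Real.rpow_pos_of_pos hε α)
  have hmono : √(ε ^ α) ≤ √(|x| ^ α) :=
    Real.sqrt_le_sqrt (Real.rpow_le_rpow hε.le hεx hα)
  calc eta α r x ≤ |r x| := eta_le_abs α r x
    _ = (√(ε ^ α))⁻¹ * (√(ε ^ α) * |r x|) := by field_simp
    _ ≤ (√(ε ^ α))⁻¹ * omegaW α r x := by
        unfold omegaW; gcongr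

theorem sqrt_rpow_add_one_add_sqrt_rpow_le (hα : α ≤ 2) (hε : 0 < ε) {x : ℝ} (hx : ε ≤ |x|) :
    √(|x| ^ α + 1) + √(|x| ^ α) ≤ (2 * ε ^ (α / 2 - 1) + ε⁻¹) * |x| := by
  have hx0 : 0 < |x| := hε.trans_le hx
  have ht : 0 ≤ |x| ^ α := Real.rpow_nonneg (abs_nonneg x) α
  have hsqrt_succ : √(|x| ^ α + 1) ≤ √(|x| ^ α) + 1 := by
    rw [Real.sqrt_le_left (by positivity)]
    nlinarith [Real.sq_sqrt ht, Real.sqrt_nonneg (|x| ^ α)]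
  have hsqrt : √(|x| ^ α) ≤ ε ^ (α / 2 - 1) * |x| := by
    have hsplit : √(|x| ^ α) = |x| ^ (α / 2 - 1) * |x| := by
      rw [Real.sqrt_eq_rpow, ← Real.rpow_mul (abs_nonneg x), ← Real.rpow_add_one hx0.ne']
      ring_nf
    rw [hsplit]
    exact mul_le_mul_of_nonneg_right (Real.rpow_le_rpow_of_nonpos hε hx (by linarith)) hx0.le
  have hone : 1 ≤ ε⁻¹ * |x| := by
    rw [← div_eq_inv_mul, one_le_div hε]; exact hx
  nlinarith

theorem abs_rminus_le_mul_eta (hα : α ≤ 2) (hε : 0 < ε) (hr0 : ∀ x, |x| ≤ ε → r x = 0)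
    (x : ℝ) : |rminus r x| ≤ (2 * ε ^ (α / 2 - 1) + ε⁻¹) * eta α r x := by
  by_cases hrx : r x = 0
  · simp only [rminus, hrx, zero_div, abs_zero]
    have := eta_nonneg α r x
    positivity
  have hεx : ε ≤ |x| := (lt_of_not_ge fun h => hrx (hr0 x h)).le
  have hx0 : 0 < |x| := hε.trans_le hεx
  rw [rminus, abs_div, div_le_iff₀ hx0, ← eta_mul_sqrt_add α r x, mul_assoc]
  exact mul_le_mul_of_nonneg_left (sqrt_rpow_add_one_add_sqrt_rpow_le hα hε hεx)
    (eta_nonneg α r x) |>.trans_eq (by ring)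

end Weights

theorem conj_integral_mul_conj_mul {X : Type*} [MeasurableSpace X] {μ : Measure X}
    (u v : X → ℂ) (w : X → ℝ) :
    conj (∫ x, u x * conj (v x) * (w x : ℂ) ∂μ) = ∫ x, v x * conj (u x) * (w x : ℂ) ∂μ := by
  rw [← integral_conj]
  congr 1 with x
  simp only [map_mul, Complex.conj_conj, Complex.conj_ofReal]
  ring

theorem integral_mul_conj_self_mul {X : Type*} [MeasurableSpace X] {μ : Measure X}
    (u : X → ℂ) (w : X → ℝ) :
    ∫ x, u x * conj (u x) * (w x : ℂ) ∂μ = ((∫ x, ‖u x‖ ^ 2 * w x ∂μ : ℝ) : ℂ) := by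
  rw [← integral_complex_ofReal]
  congr 1 with x
  rw [Complex.mul_conj']
  push_cast
  ring

section Form

variable {α : ℝ} {r : ℝ → ℝ}

theorem conj_tForm (f g : ℝ → ℂ) : conj (tForm α r g f) = tForm α r f g := by
  rw [tForm, tForm, map_add, map_mul, map_ofNat, conj_integral_mul_conj_mul,
    conj_integral_mul_conj_mul]

theorem tForm_self (f : ℝ → ℂ) : tForm α r f f = Qform α r f := by
  rw [tForm, Qform, integral_mul_conj_self_mul, integral_mul_conj_self_mul]
  push_cast
  ring

theorem Qform_nonneg (f : ℝ → ℂ) : 0 ≤ Qform α r f := by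
  rw [Qform]
  linarith [integral_norm_sq_mul_nonneg (omegaW_nonneg α r) (oddPart f),
    integral_norm_sq_mul_nonneg (eta_nonneg α r) f]

end Form

section Domain

variable {α ε : ℝ} {r : ℝ → ℝ}

theorem memL2W_eta_of_memL2W_parts (hα : 0 ≤ α) (hε : 0 < ε) (hrm : Measurable r)
    (hr0 : ∀ x, |x| ≤ ε → r x = 0) {f : ℝ → ℂ} (hfm : Measurable f)
    (he : MemL2W (eta α r) (evenPart f)) (ho : MemL2W (omegaW α r) (oddPart f)) :
    MemL2W (eta α r) f := by
  have ho' : MemL2W (eta α r) (oddPart f) := ho.of_abs_le_mul (measurable_eta hrm)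
    (fun x => (abs_of_nonneg (eta_nonneg α r x)).trans_le (eta_le_mul_omegaW hα hε hr0 x))
    hfm.oddPart.aestronglyMeasurable
  simpa only [evenPart_add_oddPart] using he.add (measurable_eta hrm) (eta_nonneg α r)
    hfm.evenPart.aestronglyMeasurable hfm.oddPart.aestronglyMeasurable ho'

theorem memL2W_rminus_of_memL2W_eta (hα : α ≤ 2) (hε : 0 < ε) (hrm : Measurable r)
    (hr0 : ∀ x, |x| ≤ ε → r x = 0) {f : ℝ → ℂ} (hfm : Measurable f)
    (hf : MemL2W (eta α r) f) : MemL2W (rminus r) f :=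
  hf.of_abs_le_mul (hrm.div measurable_id) (abs_rminus_le_mul_eta hα hε hr0)
    hfm.aestronglyMeasurable

theorem ae_eq_zero_of_Qform_eq_zero (hα : 0 ≤ α) (hε : 0 < ε) (hrm : Measurable r)
    (hr0 : ∀ x, |x| ≤ ε → r x = 0) {f : ℝ → ℂ} (hfm : Measurable f) (hf : DomT α r f)
    (hQ : Qform α r f = 0) : ∀ᵐ x, r x ≠ 0 → f x = 0 := by
  have hzero : ∫ x, ‖f x‖ ^ 2 * eta α r x = 0 := by
    rw [Qform] at hQ
    linarith [integral_norm_sq_mul_nonneg (omegaW_nonneg α r) (oddPart f),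
      integral_norm_sq_mul_nonneg (eta_nonneg α r) f]
  have hae := (integral_eq_zero_iff_of_nonneg
    (fun x => mul_nonneg (sq_nonneg _) (eta_nonneg α r x))
    (memL2W_eta_of_memL2W_parts hα hε hrm hr0 hfm hf.2.1 hf.2.2)).mp hzero
  filter_upwards [hae] with x hx hrx
  simpa [((eta_pos_iff α r x).mpr hrx).ne'] using hx

end Domain

section Completeness

variable {α ε : ℝ} {r : ℝ → ℝ}

theorem Qform_sub (f g : ℝ → ℂ) :
    Qform α r (fun x => f x - g x) = 2 * (∫ x, ‖oddPart f x - oddPart g x‖ ^ 2 * omegaW α r x) +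
      ∫ x, ‖f x - g x‖ ^ 2 * eta α r x := by
  rw [show (fun x => f x - g x) = f - g from rfl, Qform, oddPart_sub]
  rfl

theorem integral_norm_sub_sq_eta_le_Qform (f g : ℝ → ℂ) :
    ∫ x, ‖f x - g x‖ ^ 2 * eta α r x ≤ Qform α r (fun x => f x - g x) := by
  have hodd : 0 ≤ ∫ x, ‖oddPart f x - oddPart g x‖ ^ 2 * omegaW α r x :=
    integral_norm_sq_mul_nonneg (omegaW_nonneg α r) (oddPart f - oddPart g)
  rw [Qform_sub]
  linarith

theorem integral_norm_oddPart_sub_sq_omegaW_le_Qform (f g : ℝ → ℂ) :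
    ∫ x, ‖oddPart f x - oddPart g x‖ ^ 2 * omegaW α r x ≤ Qform α r (fun x => f x - g x) := by
  have hodd : 0 ≤ ∫ x, ‖oddPart f x - oddPart g x‖ ^ 2 * omegaW α r x :=
    integral_norm_sq_mul_nonneg (omegaW_nonneg α r) (oddPart f - oddPart g)
  have heta : 0 ≤ ∫ x, ‖f x - g x‖ ^ 2 * eta α r x :=
    integral_norm_sq_mul_nonneg (eta_nonneg α r) (f - g)
  rw [Qform_sub]
  linarith

theorem exists_tendsto_Qform_of_cauchy (hα : α ∈ Set.Icc 0 2) (hε : 0 < ε)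
    (hrm : Measurable r) (hr0 : ∀ x, |x| ≤ ε → r x = 0) (hrodd : ∀ x, r (-x) = -r x)
    {F : ℕ → ℝ → ℂ} (hF : ∀ n, Measurable (F n) ∧ DomT α r (F n))
    (hcau : ∀ δ > 0, ∃ N, ∀ m ≥ N, ∀ n ≥ N, Qform α r (fun x => F m x - F n x) < δ) :
    ∃ f : ℝ → ℂ, Measurable f ∧ DomT α r f ∧
      Tendsto (fun n => Qform α r (fun x => F n x - f x)) atTop (𝓝 0) := by
  have hFm n := (hF n).1
  have hFη n : MemL2W (eta α r) (F n) :=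
    memL2W_eta_of_memL2W_parts hα.1 hε hrm hr0 (hFm n) (hF n).2.2.1 (hF n).2.2.2
  obtain ⟨g, hgm, hg, hFg⟩ := exists_memL2W_tendsto_of_cauchy (measurable_eta hrm)
    (eta_nonneg α r) hFm hFη fun δ hδ => (hcau δ hδ).imp fun N hN m hm n hn =>
      (integral_norm_sub_sq_eta_le_Qform _ _).trans_lt (hN m hm n hn)
  obtain ⟨h, hhm, hh, hFh⟩ := exists_memL2W_tendsto_of_cauchy (measurable_omegaW hrm)
    (omegaW_nonneg α r) (fun n => (hFm n).oddPart) (fun n => (hF n).2.2.2)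
    fun δ hδ => (hcau δ hδ).imp fun N hN m hm n hn =>
      (integral_norm_oddPart_sub_sq_omegaW_le_Qform _ _).trans_lt (hN m hm n hn)
  have hgh : ∀ᵐ x, 0 < omegaW α r x → oddPart g x = h x :=
    ae_oddPart_eq_of_tendsto (measurable_eta hrm) (eta_nonneg α r) (eta_neg hrodd)
      (measurable_omegaW hrm) (omegaW_nonneg α r) (eta_le_mul_omegaW hα.1 hε hr0)
      (fun _ => eta_pos_of_omegaW_pos) hFm hFη (fun n => (hF n).2.2.2) hgm hg hhm hh hFg hFh
  have hodd : ∀ n, ∫ x, ‖oddPart (F n) x - oddPart g x‖ ^ 2 * omegaW α r x =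
      ∫ x, ‖oddPart (F n) x - h x‖ ^ 2 * omegaW α r x := fun n =>
    integral_congr_ae <| norm_sq_mul_ae_eq (omegaW_nonneg α r) <| by
      filter_upwards [hgh] with x hx hωx using by rw [hx hωx]
  refine ⟨g, hgm, ⟨memL2W_rminus_of_memL2W_eta hα.2 hε hrm hr0 hgm hg,
    memL2W_evenPart (measurable_eta hrm) (eta_nonneg α r) (eta_neg hrodd) hgm hg,
    hh.congr (norm_sq_mul_ae_eq (omegaW_nonneg α r) ?_)⟩, ?_⟩
  · filter_upwards [hgh] with x hx hωx using (hx hωx).symm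
  · simp_rw [Qform_sub, hodd]
    simpa using (hFh.const_mul 2).add hFg

end Completeness

theorem domT_hilbert_general (α ε : ℝ) (hα : α ∈ Set.Icc (0 : ℝ) 2) (hε : 0 < ε)
    (r : ℝ → ℝ) (hrm : Measurable r) (hr0 : ∀ x, |x| ≤ ε → r x = 0)
    (hrodd : ∀ x, r (-x) = -r x) :
    -- hermitian symmetry and the relation to the quadratic form `Qform`
    (∀ f g : ℝ → ℂ, Measurable f → Measurable g → DomT α r f → DomT α r g →
      (starRingEnd ℂ) (tForm α r g f) = tForm α r f g) ∧
    (∀ f : ℝ → ℂ, Measurable f → DomT α r f →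
      tForm α r f f = ((Qform α r f : ℝ) : ℂ) ∧ 0 ≤ Qform α r f) ∧
    -- definiteness (as elements of the weighted space: `f` vanishes a.e. where `r ≠ 0`)
    (∀ f : ℝ → ℂ, Measurable f → DomT α r f → Qform α r f = 0 →
      ∀ᵐ x ∂(volume : Measure ℝ), r x ≠ 0 → f x = 0) ∧
    -- completeness: every `t_α`-Cauchy sequence in `dom t_α` converges in `dom t_α`
    (∀ F : ℕ → ℝ → ℂ, (∀ n, Measurable (F n) ∧ DomT α r (F n)) →
      (∀ δ > 0, ∃ N, ∀ m ≥ N, ∀ n ≥ N, Qform α r (fun x => F m x - F n x) < δ) →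
      ∃ f : ℝ → ℂ, Measurable f ∧ DomT α r f ∧
        Tendsto (fun n => Qform α r (fun x => F n x - f x)) atTop (nhds 0)) :=
  ⟨fun f g _ _ _ _ => conj_tForm f g,
    fun f _ _ => ⟨tForm_self f, Qform_nonneg f⟩,
    fun _ hfm hf hQ => ae_eq_zero_of_Qform_eq_zero hα.1 hε hrm hr0 hfm hf hQ,
    fun _ hF hcau => exists_tendsto_Qform_of_cauchy hα hε hrm hr0 hrodd hF hcau⟩

/-- `(dom t_α, t_α(·,·))` is a Hilbert space: `t_α(·,·)` is a (hermitian, positive definite)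
inner product on `dom t_α` and the space is complete. -/
theorem domT_hilbert (α ε : ℝ) (hα : α ∈ Set.Icc (0 : ℝ) 2) (hε : 0 < ε)
    (r : ℝ → ℝ) (hrm : Measurable r) (hr0 : ∀ x, |x| ≤ ε → r x = 0)
    (hrpos : ∀ᵐ x ∂(volume : Measure ℝ), ε < |x| → 0 < x * r x)
    (hrodd : ∀ x, r (-x) = -r x) :
    -- hermitian symmetry and the relation to the quadratic form `Qform`
    (∀ f g : ℝ → ℂ, Measurable f → Measurable g → DomT α r f → DomT α r g →
      (starRingEnd ℂ) (tForm α r g f) = tForm α r f g) ∧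
    (∀ f : ℝ → ℂ, Measurable f → DomT α r f →
      tForm α r f f = ((Qform α r f : ℝ) : ℂ) ∧ 0 ≤ Qform α r f) ∧
    -- definiteness (as elements of the weighted space: `f` vanishes a.e. where `r ≠ 0`)
    (∀ f : ℝ → ℂ, Measurable f → DomT α r f → Qform α r f = 0 →
      ∀ᵐ x ∂(volume : Measure ℝ), r x ≠ 0 → f x = 0) ∧
    -- completeness: every `t_α`-Cauchy sequence in `dom t_α` converges in `dom t_α`
    (∀ F : ℕ → ℝ → ℂ, (∀ n, Measurable (F n) ∧ DomT α r (F n)) →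
      (∀ δ > 0, ∃ N, ∀ m ≥ N, ∀ n ≥ N, Qform α r (fun x => F m x - F n x) < δ) →
      ∃ f : ℝ → ℂ, Measurable f ∧ DomT α r f ∧
        Tendsto (fun n => Qform α r (fun x => F n x - f x)) atTop (nhds 0)) :=
  domT_hilbert_general α ε hα hε r hrm hr0 hrodd
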